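/- Let k, ℓ, m be positive integers. Let a and c be equicorrelational k-ary sequences of length ℓ, and let b and d be equicorrelational k-ary sequences of length m. Then f(z) = a(z^m)·b(z) and g(z) = c(z^m)·d(z) are equicorrelational k-ary sequences of length ℓ·m. Furthermore, f is trivially equicorrelational to g if and only if at least one of the following holds: (i) a is a ℂ[z,z⁻¹]-associate of c and b is a ℂ[z,z⁻¹]-associate of d; or (ii) a is a ℂ[z,z⁻¹]-associate of c̄ and b is a ℂ[z,z⁻¹]-associate of d̄. In particular, if a is nontrivially equicorrelational to c or b is nontrivially equicorrelational to d, then f is nontrivially equicorrelational to g. -/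

import Mathlib

open LaurentPolynomial
open scoped Classical

/-- The length of a Laurent polynomial: 1 plus the difference between the maximal and
minimal exponents occurring with nonzero coefficient; the length of 0 is 0. -/
noncomputable def len {F : Type*} [Field F] (f : LaurentPolynomial F) : ℤ :=
  if h : f = 0 then 0
  else f.coeff.support.max' (Finsupp.support_nonempty_iff.mpr
      (fun hc => h (congrArg AddMonoidAlgebra.ofCoeff hc)))
     - f.coeff.support.min' (Finsupp.support_nonempty_iff.mpr
      (fun hc => h (congrArg AddMonoidAlgebra.ofCoeff hc))) + 1

/-- Substitution `f(z) ↦ f(z^m)`: the image of `f` under the ring homomorphism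
sending `z` to `z^m`. -/
noncomputable def subst {F : Type*} [Field F] (m : ℤ) (f : LaurentPolynomial F) :
    LaurentPolynomial F :=
  AddMonoidAlgebra.mapDomainRingHom F (AddMonoidHom.mulLeft m) f

/-- The subring `F[z,z⁻¹]` of `E[z,z⁻¹]` consisting of Laurent polynomials all of whose
coefficients lie in the subfield `F` of `E`. -/
noncomputable def LRing {E : Type*} [Field E] (F : Subfield E) :
    Subring (LaurentPolynomial E) where
  carrier := {f : LaurentPolynomial E | ∀ n : ℤ, f.coeff n ∈ F}
  zero_mem' := fun n => F.zero_mem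
  one_mem' := by
    intro n
    rw [AddMonoidAlgebra.one_def]
    show (Finsupp.single (0 : ℤ) (1 : E)) n ∈ F
    rw [Finsupp.single_apply]
    split_ifs
    · exact F.one_mem
    · exact F.zero_mem
  add_mem' := by
    intro f g hf hg n
    rw [AddMonoidAlgebra.coeff_add, Finsupp.add_apply]
    exact add_mem (hf n) (hg n)
  neg_mem' := by
    intro f hf n
    rw [AddMonoidAlgebra.coeff_neg, Finsupp.neg_apply]
    exact neg_mem (hf n)
  mul_mem' := by
    intro f g hf hg n
    rw [AddMonoidAlgebra.coeff_mul]
    refine sum_mem fun a ha => sum_mem fun b hb => ?_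
    dsimp only
    split_ifs
    · exact mul_mem (hf a) (hg b)
    · exact zero_mem F

/-- The conjugate of `f(z) = Σ f_j z^j`, namely `f̄(z) = Σ conj(f_j) z^{-j}`. -/
noncomputable def lconj (f : LaurentPolynomial ℂ) : LaurentPolynomial ℂ :=
  AddMonoidAlgebra.ofCoeff
    (Finsupp.equivMapDomain (Equiv.neg ℤ) (Finsupp.mapRange (starRingEnd ℂ) (map_zero _) f.coeff))

/-- `f` and `g` are equicorrelational: `f·f̄ = c·g·ḡ` for some positive real `c`. -/
def Equicorrelational (f g : LaurentPolynomial ℂ) : Prop :=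
  ∃ c : ℝ, 0 < c ∧ f * lconj f = C (c : ℂ) * (g * lconj g)

/-- `f` and `g` are trivially equicorrelational: `g` is a `ℂ[z,z⁻¹]`-associate of `f`
or of `f̄`. -/
def TrivEquicorrelational (f g : LaurentPolynomial ℂ) : Prop :=
  Associated g f ∨ Associated g (lconj f)

/-- A generalized palindrome: `f̄` is a `ℂ[z,z⁻¹]`-associate of `f`. -/
def GenPalindrome (f : LaurentPolynomial ℂ) : Prop :=
  Associated (lconj f) f

/-- `g` is an `F[z,z⁻¹]`-associate of `f`: `g = u·f` for some unit `u` of the subring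
`F[z,z⁻¹]` of `ℂ[z,z⁻¹]`. -/
def FAssoc (F : Subfield ℂ) (g f : LaurentPolynomial ℂ) : Prop :=
  ∃ u : (LRing F)ˣ, g = ((u : LRing F) : LaurentPolynomial ℂ) * f

/-- The `F[z,z⁻¹]`-associate class of `f`. -/
def facl (F : Subfield ℂ) (f : LaurentPolynomial ℂ) : Set (LaurentPolynomial ℂ) :=
  {g | FAssoc F g f}

/-- The `F`-trivial equicorrelationality class of `f`: all elements of `F[z,z⁻¹]`
that are trivially equicorrelational to `f`. -/
def fte (F : Subfield ℂ) (f : LaurentPolynomial ℂ) : Set (LaurentPolynomial ℂ) :=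
  {g | g ∈ LRing F ∧ TrivEquicorrelational f g}

/-- A `k`-ary sequence: a Laurent polynomial whose support is a segment of consecutive
integers and whose nonzero coefficients are complex `k`-th roots of unity. -/
def IsKary (k : ℕ) (f : LaurentPolynomial ℂ) : Prop :=
  (∀ i j l : ℤ, i ≤ j → j ≤ l → f.coeff i ≠ 0 → f.coeff l ≠ 0 → f.coeff j ≠ 0) ∧
  ∀ n : ℤ, f.coeff n ≠ 0 → (f.coeff n) ^ k = 1

/-- A binary sequence: a Laurent polynomial whose support is a segment of consecutive
integers and whose nonzero coefficients all lie in `{1, -1}`. -/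
def IsBinary (f : LaurentPolynomial ℂ) : Prop :=
  (∀ i j l : ℤ, i ≤ j → j ≤ l → f.coeff i ≠ 0 → f.coeff l ≠ 0 → f.coeff j ≠ 0) ∧
  ∀ n : ℤ, f.coeff n ≠ 0 → f.coeff n = 1 ∨ f.coeff n = -1


/-! If `len b = m`, the exponents of `a(z^m)` are multiples of `m` while those of `b` fill a
window of `m` consecutive integers, so every exponent of `a(z^m) b(z)` splits uniquely as
`m i + j` with coefficient `a_i b_j`: the coefficient sequence is the Kronecker product of those
of `a` and `b`. This gives the `k`-ary and length claims; equicorrelation holds because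
`f ↦ f f̄` is multiplicative and commutes with `z ↦ z^m`.

The units of `F[z,z⁻¹]` are the monomials `α z^n`. If `a(z^m) b(z) · α z^n = c(z^m) d(z)`,
comparing lowest exponents pins down `n`, and the coefficients at the exponents `m i + min d`
then show that `c` is a monomial multiple of `a`; cancelling `a(z^m)` gives `b ~ d`. The
conjugate case reduces to this one, since `f̄ = ā(z^m) b̄(z)` and `b̄` again has length `m`. -/

section Exponents

variable {F : Type*} [Field F] {f g : F[T;T⁻¹]} {n : ℤ}

noncomputable def maxExp (f : F[T;T⁻¹]) : ℤ :=
  if h : f = 0 then 0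
  else f.coeff.support.max' (Finsupp.support_nonempty_iff.mpr
      (fun hc => h (congrArg AddMonoidAlgebra.ofCoeff hc)))

noncomputable def minExp (f : F[T;T⁻¹]) : ℤ :=
  if h : f = 0 then 0
  else f.coeff.support.min' (Finsupp.support_nonempty_iff.mpr
      (fun hc => h (congrArg AddMonoidAlgebra.ofCoeff hc)))

lemma len_eq_maxExp_sub_minExp_add_one (hf : f ≠ 0) : len f = maxExp f - minExp f + 1 := by
  rw [len, maxExp, minExp, dif_neg hf, dif_neg hf, dif_neg hf]

lemma ne_zero_of_len_pos (h : 0 < len f) : f ≠ 0 := by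
  rintro rfl
  simp [len] at h

lemma coeff_maxExp_ne_zero (hf : f ≠ 0) : f.coeff (maxExp f) ≠ 0 := by
  rw [maxExp, dif_neg hf]
  exact Finsupp.mem_support_iff.mp (Finset.max'_mem _ _)

lemma coeff_minExp_ne_zero (hf : f ≠ 0) : f.coeff (minExp f) ≠ 0 := by
  rw [minExp, dif_neg hf]
  exact Finsupp.mem_support_iff.mp (Finset.min'_mem _ _)

lemma le_maxExp (h : f.coeff n ≠ 0) : n ≤ maxExp f := by
  have hf : f ≠ 0 := by rintro rfl; exact h rfl
  rw [maxExp, dif_neg hf]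
  exact Finset.le_max' _ n (Finsupp.mem_support_iff.mpr h)

lemma minExp_le (h : f.coeff n ≠ 0) : minExp f ≤ n := by
  have hf : f ≠ 0 := by rintro rfl; exact h rfl
  rw [minExp, dif_neg hf]
  exact Finset.min'_le _ n (Finsupp.mem_support_iff.mpr h)

lemma minExp_le_maxExp (hf : f ≠ 0) : minExp f ≤ maxExp f :=
  minExp_le (coeff_maxExp_ne_zero hf)

lemma mem_Ico_of_coeff_ne_zero (h : f.coeff n ≠ 0) :
    n ∈ Set.Ico (minExp f) (minExp f + len f) := by
  have hf : f ≠ 0 := by rintro rfl; exact h rfl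
  have := le_maxExp h
  rw [len_eq_maxExp_sub_minExp_add_one hf]
  exact ⟨minExp_le h, by omega⟩

lemma eq_maxExp_of_coeff_ne_zero (hlen : len f = 1) (h : f.coeff n ≠ 0) : n = maxExp f := by
  have hf : f ≠ 0 := by rintro rfl; exact h rfl
  have hn := mem_Ico_of_coeff_ne_zero h
  have hmax := mem_Ico_of_coeff_ne_zero (coeff_maxExp_ne_zero hf)
  rw [hlen, Set.mem_Ico] at hn hmax
  omega

lemma eq_of_coeff_single_ne_zero {α : F} {p : ℤ}
    (h : (AddMonoidAlgebra.single n α : F[T;T⁻¹]).coeff p ≠ 0) : p = n := by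
  by_contra hp
  rw [AddMonoidAlgebra.coeff_single, Finsupp.single_eq_of_ne hp] at h
  exact h rfl

lemma maxExp_single {α : F} (hα : α ≠ 0) : maxExp (AddMonoidAlgebra.single n α) = n :=
  eq_of_coeff_single_ne_zero (coeff_maxExp_ne_zero (AddMonoidAlgebra.single_ne_zero.mpr hα))

lemma minExp_single {α : F} (hα : α ≠ 0) : minExp (AddMonoidAlgebra.single n α) = n :=
  eq_of_coeff_single_ne_zero (coeff_minExp_ne_zero (AddMonoidAlgebra.single_ne_zero.mpr hα))

lemma len_single {α : F} (hα : α ≠ 0) : len (AddMonoidAlgebra.single n α) = 1 := by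
  rw [len_eq_maxExp_sub_minExp_add_one (AddMonoidAlgebra.single_ne_zero.mpr hα),
    maxExp_single hα, minExp_single hα]
  ring

lemma coeff_mul_maxExp_add_maxExp :
    (f * g).coeff (maxExp f + maxExp g) = f.coeff (maxExp f) * g.coeff (maxExp g) :=
  AddMonoidAlgebra.coeff_mul_add_of_uniqueAdd fun x y hx hy hxy => by
    have := le_maxExp (Finsupp.mem_support_iff.mp hx)
    have := le_maxExp (Finsupp.mem_support_iff.mp hy)
    omega

lemma coeff_mul_minExp_add_minExp :
    (f * g).coeff (minExp f + minExp g) = f.coeff (minExp f) * g.coeff (minExp g) :=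
  AddMonoidAlgebra.coeff_mul_add_of_uniqueAdd fun x y hx hy hxy => by
    have := minExp_le (Finsupp.mem_support_iff.mp hx)
    have := minExp_le (Finsupp.mem_support_iff.mp hy)
    omega

lemma exists_add_of_coeff_mul_ne_zero (h : (f * g).coeff n ≠ 0) :
    ∃ x y, f.coeff x ≠ 0 ∧ g.coeff y ≠ 0 ∧ x + y = n := by
  obtain ⟨x, hx, y, hy, hxy⟩ := Finset.mem_add.mp
    (AddMonoidAlgebra.support_coeff_mul_subset f g (Finsupp.mem_support_iff.mpr h))
  exact ⟨x, y, Finsupp.mem_support_iff.mp hx, Finsupp.mem_support_iff.mp hy, hxy⟩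

lemma maxExp_mul (hf : f ≠ 0) (hg : g ≠ 0) : maxExp (f * g) = maxExp f + maxExp g := by
  refine le_antisymm ?_ (le_maxExp ?_)
  · obtain ⟨x, y, hx, hy, hxy⟩ :=
      exists_add_of_coeff_mul_ne_zero (coeff_maxExp_ne_zero (mul_ne_zero hf hg))
    have := le_maxExp hx
    have := le_maxExp hy
    omega
  · rw [coeff_mul_maxExp_add_maxExp]
    exact mul_ne_zero (coeff_maxExp_ne_zero hf) (coeff_maxExp_ne_zero hg)

lemma minExp_mul (hf : f ≠ 0) (hg : g ≠ 0) : minExp (f * g) = minExp f + minExp g := by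
  refine le_antisymm (minExp_le ?_) ?_
  · rw [coeff_mul_minExp_add_minExp]
    exact mul_ne_zero (coeff_minExp_ne_zero hf) (coeff_minExp_ne_zero hg)
  · obtain ⟨x, y, hx, hy, hxy⟩ :=
      exists_add_of_coeff_mul_ne_zero (coeff_minExp_ne_zero (mul_ne_zero hf hg))
    have := minExp_le hx
    have := minExp_le hy
    omega

lemma len_mul (hf : f ≠ 0) (hg : g ≠ 0) : len (f * g) = len f + len g - 1 := by
  rw [len_eq_maxExp_sub_minExp_add_one (mul_ne_zero hf hg), len_eq_maxExp_sub_minExp_add_one hf,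
    len_eq_maxExp_sub_minExp_add_one hg, maxExp_mul hf hg, minExp_mul hf hg]
  ring

lemma exists_eq_single_of_isUnit {u : F[T;T⁻¹]} (hu : IsUnit u) :
    ∃ n α, α ≠ 0 ∧ u = AddMonoidAlgebra.single n α := by
  obtain ⟨v, huv⟩ := isUnit_iff_exists_inv.mp hu
  have hu0 : u ≠ 0 := hu.ne_zero
  have hv0 : v ≠ 0 := right_ne_zero_of_mul_eq_one huv
  have hlen : len u = 1 := by
    have h1 := len_mul hu0 hv0
    rw [huv, AddMonoidAlgebra.one_def, len_single one_ne_zero] at h1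
    have := minExp_le_maxExp hu0
    have := minExp_le_maxExp hv0
    rw [len_eq_maxExp_sub_minExp_add_one hu0, len_eq_maxExp_sub_minExp_add_one hv0] at h1
    rw [len_eq_maxExp_sub_minExp_add_one hu0]
    omega
  refine ⟨maxExp u, u.coeff (maxExp u), coeff_maxExp_ne_zero hu0, ?_⟩
  ext p
  rw [AddMonoidAlgebra.coeff_single, Finsupp.single_apply]
  split_ifs with hp
  · rw [hp]
  · by_contra h
    exact hp (eq_maxExp_of_coeff_ne_zero hlen h).symm

end Exponents

section Substitution

variable {F : Type*} [Field F] {m : ℤ} {f g : F[T;T⁻¹]}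

lemma coeff_subst (hm : m ≠ 0) (f : F[T;T⁻¹]) (i : ℤ) : (subst m f).coeff (m * i) = f.coeff i :=
  Finsupp.mapDomain_apply (mul_right_injective₀ hm) f.coeff i

lemma coeff_subst_of_not_dvd {p : ℤ} (h : ¬ m ∣ p) : (subst m f).coeff p = 0 :=
  Finsupp.mapDomain_of_notMem_range f.coeff p fun ⟨i, hi⟩ => h ⟨i, hi.symm⟩

lemma exists_eq_mul_of_coeff_subst_ne_zero (hm : m ≠ 0) {p : ℤ} (h : (subst m f).coeff p ≠ 0) :
    ∃ i, p = m * i ∧ f.coeff i ≠ 0 := by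
  by_cases hd : m ∣ p
  · obtain ⟨i, rfl⟩ := hd
    exact ⟨i, rfl, by rwa [coeff_subst hm] at h⟩
  · exact absurd (coeff_subst_of_not_dvd hd) h

lemma subst_ne_zero (hm : m ≠ 0) (hf : f ≠ 0) : subst m f ≠ 0 := by
  intro h
  apply coeff_minExp_ne_zero hf
  rw [← coeff_subst hm, h]
  rfl

lemma maxExp_subst (hm : 0 < m) (hf : f ≠ 0) : maxExp (subst m f) = m * maxExp f := by
  refine le_antisymm ?_ (le_maxExp ?_)
  · obtain ⟨i, hp, hi⟩ :=
      exists_eq_mul_of_coeff_subst_ne_zero hm.ne' (coeff_maxExp_ne_zero (subst_ne_zero hm.ne' hf))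
    rw [hp]
    exact mul_le_mul_of_nonneg_left (le_maxExp hi) hm.le
  · rw [coeff_subst hm.ne']
    exact coeff_maxExp_ne_zero hf

lemma minExp_subst (hm : 0 < m) (hf : f ≠ 0) : minExp (subst m f) = m * minExp f := by
  refine le_antisymm (minExp_le ?_) ?_
  · rw [coeff_subst hm.ne']
    exact coeff_minExp_ne_zero hf
  · obtain ⟨i, hp, hi⟩ :=
      exists_eq_mul_of_coeff_subst_ne_zero hm.ne' (coeff_minExp_ne_zero (subst_ne_zero hm.ne' hf))
    rw [hp]
    exact mul_le_mul_of_nonneg_left (minExp_le hi) hm.le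

lemma len_subst (hm : 0 < m) (hf : f ≠ 0) : len (subst m f) = m * (len f - 1) + 1 := by
  rw [len_eq_maxExp_sub_minExp_add_one (subst_ne_zero hm.ne' hf),
    len_eq_maxExp_sub_minExp_add_one hf, maxExp_subst hm hf, minExp_subst hm hf]
  ring

lemma subst_mul (m : ℤ) (f g : F[T;T⁻¹]) : subst m (f * g) = subst m f * subst m g :=
  map_mul (AddMonoidAlgebra.mapDomainRingHom F (AddMonoidHom.mulLeft m)) f g

lemma subst_C (m : ℤ) (x : F) : subst m (C x) = C x := by
  rw [← single_eq_C, subst, AddMonoidAlgebra.mapDomainRingHom_apply,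
    AddMonoidAlgebra.mapDomain_single, AddMonoidHom.coe_mulLeft, mul_zero]

lemma associated_subst (h : Associated f g) (m : ℤ) : Associated (subst m f) (subst m g) :=
  h.map (AddMonoidAlgebra.mapDomainRingHom F (AddMonoidHom.mulLeft m))

end Substitution

section Kronecker

variable {F : Type*} [Field F] {m : ℤ} {a b : F[T;T⁻¹]}

lemma coeff_subst_mul_add (hm : 0 < m) (hb : len b = m) (i : ℤ) {j : ℤ}
    (hj : j ∈ Set.Ico (minExp b) (minExp b + m)) :
    (subst m a * b).coeff (m * i + j) = a.coeff i * b.coeff j := by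
  rw [← coeff_subst hm.ne' a i]
  refine AddMonoidAlgebra.coeff_mul_add_of_uniqueAdd fun x y hx hy hxy => ?_
  obtain ⟨i', rfl, -⟩ :=
    exists_eq_mul_of_coeff_subst_ne_zero hm.ne' (Finsupp.mem_support_iff.mp hx)
  have hy' := mem_Ico_of_coeff_ne_zero (Finsupp.mem_support_iff.mp hy)
  rw [hb, Set.mem_Ico] at hy'
  rw [Set.mem_Ico] at hj
  have hyj : j - y = 0 :=
    Int.eq_zero_of_abs_lt_dvd (m := m) ⟨i' - i, by linear_combination -hxy⟩
      (abs_lt.mpr ⟨by omega, by omega⟩)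
  exact ⟨by linear_combination hxy + hyj, by linear_combination -hyj⟩

lemma coeff_subst_mul (hm : 0 < m) (hb : len b = m) (n : ℤ) :
    (subst m a * b).coeff n =
      a.coeff ((n - minExp b) / m) * b.coeff (minExp b + (n - minExp b) % m) := by
  have hr := Int.emod_nonneg (n - minExp b) hm.ne'
  have hrm := Int.emod_lt_of_pos (n - minExp b) hm
  conv_lhs => rw [show n = m * ((n - minExp b) / m) + (minExp b + (n - minExp b) % m) by
    linarith [Int.mul_ediv_add_emod (n - minExp b) m]]
  exact coeff_subst_mul_add hm hb _ ⟨by omega, by omega⟩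

lemma len_subst_mul (hm : 0 < m) (hb : len b = m) : len (subst m a * b) = len a * m := by
  have hb0 : b ≠ 0 := ne_zero_of_len_pos (hb ▸ hm)
  rcases eq_or_ne a 0 with rfl | ha0
  · rw [show subst m (0 : F[T;T⁻¹]) = 0 from map_zero _, zero_mul]
    simp [len]
  rw [len_mul (subst_ne_zero hm.ne' ha0) hb0, len_subst hm ha0, hb]
  ring

end Kronecker

lemma isKary_subst_mul {k : ℕ} {m : ℤ} {a b : ℂ[T;T⁻¹]} (hm : 0 < m) (hb : len b = m)
    (hak : IsKary k a) (hbk : IsKary k b) : IsKary k (subst m a * b) := by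
  have hb0 : b ≠ 0 := ne_zero_of_len_pos (hb ▸ hm)
  have hbfull : ∀ r, 0 ≤ r → r < m → b.coeff (minExp b + r) ≠ 0 := by
    intro r hr hrm
    have := len_eq_maxExp_sub_minExp_add_one hb0
    exact hbk.1 _ _ _ (by omega) (by omega) (coeff_minExp_ne_zero hb0) (coeff_maxExp_ne_zero hb0)
  refine ⟨fun i j l hij hjl hi hl => ?_, fun n hn => ?_⟩
  · rw [coeff_subst_mul hm hb] at hi hl ⊢
    exact mul_ne_zero
      (hak.1 _ _ _ (Int.ediv_le_ediv hm (by omega)) (Int.ediv_le_ediv hm (by omega))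
        (left_ne_zero_of_mul hi) (left_ne_zero_of_mul hl))
      (hbfull _ (Int.emod_nonneg _ hm.ne') (Int.emod_lt_of_pos _ hm))
  · rw [coeff_subst_mul hm hb] at hn ⊢
    rw [mul_pow, hak.2 _ (left_ne_zero_of_mul hn), hbk.2 _ (right_ne_zero_of_mul hn), one_mul]

section Conjugation

variable {f g : ℂ[T;T⁻¹]}

lemma coeff_lconj (f : ℂ[T;T⁻¹]) (n : ℤ) : (lconj f).coeff n = starRingEnd ℂ (f.coeff (-n)) :=
  rfl

noncomputable def lconjHom : ℂ[T;T⁻¹] →+* ℂ[T;T⁻¹] :=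
  (invert : ℂ[T;T⁻¹] ≃ₐ[ℂ] ℂ[T;T⁻¹]).toRingHom.comp
    (AddMonoidAlgebra.mapRingHom ℤ (starRingEnd ℂ))

lemma lconjHom_apply (f : ℂ[T;T⁻¹]) : lconjHom f = lconj f := by
  ext n
  simp [lconjHom, coeff_lconj, AddMonoidAlgebra.coeff_mapRingHom]

lemma lconj_mul (f g : ℂ[T;T⁻¹]) : lconj (f * g) = lconj f * lconj g := by
  simp only [← lconjHom_apply, map_mul]

@[simp]
lemma lconj_lconj (f : ℂ[T;T⁻¹]) : lconj (lconj f) = f := by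
  ext n
  simp [coeff_lconj]

lemma lconj_eq_zero : lconj f = 0 ↔ f = 0 := by
  refine ⟨fun h => ?_, fun h => by rw [h, ← lconjHom_apply, map_zero]⟩
  rw [← lconj_lconj f, h, ← lconjHom_apply, map_zero]

lemma Associated.lconj (h : Associated f g) : Associated (lconj f) (lconj g) := by
  simpa only [lconjHom_apply] using h.map lconjHom

lemma associated_lconj_comm : Associated f (lconj g) ↔ Associated g (lconj f) :=
  ⟨fun h => by simpa using h.lconj.symm, fun h => by simpa using h.lconj.symm⟩

lemma lconj_single (n : ℤ) (r : ℂ) :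
    lconj (AddMonoidAlgebra.single n r) = AddMonoidAlgebra.single (-n) (starRingEnd ℂ r) := by
  ext p
  rw [coeff_lconj, AddMonoidAlgebra.coeff_single, AddMonoidAlgebra.coeff_single,
    Finsupp.single_apply, Finsupp.single_apply]
  split_ifs <;> first | (exfalso; omega) | simp

lemma subst_single (m n : ℤ) (r : ℂ) :
    subst m (AddMonoidAlgebra.single n r) = AddMonoidAlgebra.single (m * n) r :=
  AddMonoidAlgebra.mapDomain_single

lemma lconj_subst (m : ℤ) (f : ℂ[T;T⁻¹]) : lconj (subst m f) = subst m (lconj f) := by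
  let substHom := AddMonoidAlgebra.mapDomainRingHom ℂ (AddMonoidHom.mulLeft m)
  have h : lconjHom.comp substHom = substHom.comp lconjHom := by
    refine AddMonoidAlgebra.ringHom_ext (fun r => ?_) (fun n => ?_) <;>
    · change lconjHom (subst m _) = subst m (lconjHom _)
      simp only [lconjHom_apply, subst_single, lconj_single, mul_neg]
  rw [← lconjHom_apply, ← lconjHom_apply]
  exact DFunLike.congr_fun h f

lemma coeff_lconj_ne_zero {n : ℤ} : (lconj f).coeff n ≠ 0 ↔ f.coeff (-n) ≠ 0 := by
  rw [coeff_lconj, map_ne_zero]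

lemma maxExp_lconj (hf : f ≠ 0) : maxExp (lconj f) = -minExp f := by
  refine le_antisymm ?_ (le_maxExp (coeff_lconj_ne_zero.mpr ?_))
  · have := minExp_le (coeff_lconj_ne_zero.mp (coeff_maxExp_ne_zero (lconj_eq_zero.not.mpr hf)))
    omega
  · rw [neg_neg]
    exact coeff_minExp_ne_zero hf

lemma minExp_lconj (hf : f ≠ 0) : minExp (lconj f) = -maxExp f := by
  have := maxExp_lconj (lconj_eq_zero.not.mpr hf)
  rw [lconj_lconj] at this
  omega

lemma len_lconj (f : ℂ[T;T⁻¹]) : len (lconj f) = len f := by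
  rcases eq_or_ne f 0 with rfl | hf
  · rw [lconj_eq_zero.mpr rfl]
  rw [len_eq_maxExp_sub_minExp_add_one (lconj_eq_zero.not.mpr hf),
    len_eq_maxExp_sub_minExp_add_one hf, maxExp_lconj hf, minExp_lconj hf]
  ring

end Conjugation

lemma equicorrelational_subst_mul {a b c d : ℂ[T;T⁻¹]} (hac : Equicorrelational a c)
    (hbd : Equicorrelational b d) (m : ℤ) :
    Equicorrelational (subst m a * b) (subst m c * d) := by
  obtain ⟨r, hr, hac⟩ := hac
  obtain ⟨s, hs, hbd⟩ := hbd
  have hexpand : ∀ x y : ℂ[T;T⁻¹],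
      subst m x * y * lconj (subst m x * y) = subst m (x * lconj x) * (y * lconj y) := by
    intro x y
    rw [lconj_mul, lconj_subst, subst_mul]
    ring
  refine ⟨r * s, mul_pos hr hs, ?_⟩
  rw [hexpand, hexpand, hac, hbd, subst_mul, subst_C, Complex.ofReal_mul, map_mul]
  ring

section Associates

variable {F : Type*} [Field F] {m : ℤ} {a b c d : F[T;T⁻¹]}

lemma isUnit_single {β : F} (hβ : β ≠ 0) (s : ℤ) :
    IsUnit (AddMonoidAlgebra.single s β : F[T;T⁻¹]) := by
  rw [single_eq_C_mul_T]
  exact ((isUnit_iff_ne_zero.mpr hβ).map C).mul (isUnit_T s)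

lemma associated_of_coeff_eq {β : F} (hβ : β ≠ 0) (s : ℤ)
    (h : ∀ i, c.coeff i = a.coeff (i - s) * β) : Associated a c := by
  refine ⟨(isUnit_single hβ s).unit, ?_⟩
  ext i
  rw [IsUnit.unit_spec, AddMonoidAlgebra.coeff_mul_single_apply, h, sub_eq_add_neg]

lemma associated_of_associated_subst_mul (hm : 0 < m) (ha : a ≠ 0) (hb : len b = m)
    (hd : len d = m) (h : Associated (subst m a * b) (subst m c * d)) : Associated a c := by
  obtain ⟨u, hu⟩ := h
  obtain ⟨n, α, hα, hun⟩ := exists_eq_single_of_isUnit u.isUnit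
  rw [hun] at hu
  have hb0 : b ≠ 0 := ne_zero_of_len_pos (hb ▸ hm)
  have hd0 : d ≠ 0 := ne_zero_of_len_pos (hd ▸ hm)
  have hf0 : subst m a * b ≠ 0 := mul_ne_zero (subst_ne_zero hm.ne' ha) hb0
  have hc0 : c ≠ 0 := by
    rintro rfl
    rw [show subst m (0 : F[T;T⁻¹]) = 0 from map_zero _, zero_mul] at hu
    exact mul_ne_zero hf0 (AddMonoidAlgebra.single_ne_zero.mpr hα) hu
  have hn : m * minExp c + minExp d = m * minExp a + minExp b + n := by
    have := congrArg minExp hu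
    rw [minExp_mul hf0 (AddMonoidAlgebra.single_ne_zero.mpr hα), minExp_single hα,
      minExp_mul (subst_ne_zero hm.ne' hc0) hd0, minExp_mul (subst_ne_zero hm.ne' ha) hb0,
      minExp_subst hm ha, minExp_subst hm hc0] at this
    linarith
  have hbmin : minExp b ∈ Set.Ico (minExp b) (minExp b + m) := ⟨le_rfl, by omega⟩
  have hdmin : minExp d ∈ Set.Ico (minExp d) (minExp d + m) := ⟨le_rfl, by omega⟩
  have hb1 := coeff_minExp_ne_zero hb0
  have hd1 := coeff_minExp_ne_zero hd0
  refine associated_of_coeff_eq (β := b.coeff (minExp b) * α / d.coeff (minExp d))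
    (div_ne_zero (mul_ne_zero hb1 hα) hd1) (minExp c - minExp a) fun i => ?_
  have hi := congrArg (fun f : F[T;T⁻¹] => f.coeff (m * i + minExp d)) hu
  rw [AddMonoidAlgebra.coeff_mul_single_apply,
    show m * i + minExp d + -n = m * (i - (minExp c - minExp a)) + minExp b by
      linear_combination hn,
    coeff_subst_mul_add hm hb _ hbmin, coeff_subst_mul_add hm hd _ hdmin] at hi
  field_simp
  linear_combination -hi

lemma associated_subst_mul_iff (hm : 0 < m) (ha : a ≠ 0) (hb : len b = m) (hd : len d = m) :
    Associated (subst m a * b) (subst m c * d) ↔ Associated a c ∧ Associated b d := by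
  refine ⟨fun h => ?_, fun ⟨hac, hbd⟩ => (associated_subst hac m).mul_mul hbd⟩
  have hac := associated_of_associated_subst_mul hm ha hb hd h
  exact ⟨hac, h.of_mul_left (associated_subst hac m) (subst_ne_zero hm.ne' ha)⟩

end Associates

lemma trivEquicorrelational_iff {f g : ℂ[T;T⁻¹]} :
    TrivEquicorrelational f g ↔ Associated f g ∨ Associated f (lconj g) :=
  or_congr Associated.comm associated_lconj_comm

lemma trivEquicorrelational_subst_mul_iff {m : ℤ} {a b c d : ℂ[T;T⁻¹]} (hm : 0 < m) (ha : a ≠ 0)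
    (hb : len b = m) (hd : len d = m) :
    TrivEquicorrelational (subst m a * b) (subst m c * d) ↔
      (Associated a c ∧ Associated b d) ∨ (Associated a (lconj c) ∧ Associated b (lconj d)) := by
  rw [trivEquicorrelational_iff, lconj_mul, lconj_subst, associated_subst_mul_iff hm ha hb hd,
    associated_subst_mul_iff hm ha hb (by rw [len_lconj, hd])]

theorem stmt18_general (k l m : ℕ) (hl : 0 < l) (hm : 0 < m)
    (a b c d : LaurentPolynomial ℂ)
    (hak : IsKary k a) (hck : IsKary k c) (hbk : IsKary k b) (hdk : IsKary k d)
    (hal : len a = (l : ℤ)) (hcl : len c = (l : ℤ))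
    (hbm : len b = (m : ℤ)) (hdm : len d = (m : ℤ))
    (hac : Equicorrelational a c) (hbd : Equicorrelational b d) :
    IsKary k (subst (m : ℤ) a * b) ∧ IsKary k (subst (m : ℤ) c * d) ∧
    len (subst (m : ℤ) a * b) = (l : ℤ) * m ∧
    len (subst (m : ℤ) c * d) = (l : ℤ) * m ∧
    Equicorrelational (subst (m : ℤ) a * b) (subst (m : ℤ) c * d) ∧
    (TrivEquicorrelational (subst (m : ℤ) a * b) (subst (m : ℤ) c * d) ↔
      (Associated a c ∧ Associated b d) ∨
      (Associated a (lconj c) ∧ Associated b (lconj d))) ∧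
    (((Equicorrelational a c ∧ ¬ TrivEquicorrelational a c) ∨
        (Equicorrelational b d ∧ ¬ TrivEquicorrelational b d)) →
      (Equicorrelational (subst (m : ℤ) a * b) (subst (m : ℤ) c * d) ∧
        ¬ TrivEquicorrelational (subst (m : ℤ) a * b) (subst (m : ℤ) c * d))) := by
  have hm' : (0 : ℤ) < m := by exact_mod_cast hm
  have ha : a ≠ 0 := ne_zero_of_len_pos (by rw [hal]; exact_mod_cast hl)
  have hequi := equicorrelational_subst_mul hac hbd m
  have htriv := trivEquicorrelational_subst_mul_iff (c := c) hm' ha hbm hdm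
  refine ⟨isKary_subst_mul hm' hbm hak hbk, isKary_subst_mul hm' hdm hck hdk,
    by rw [len_subst_mul hm' hbm, hal], by rw [len_subst_mul hm' hdm, hcl],
    hequi, htriv, fun hnontriv => ⟨hequi, fun h => ?_⟩⟩
  simp only [trivEquicorrelational_iff] at hnontriv
  rcases htriv.mp h with ⟨h₁, h₂⟩ | ⟨h₁, h₂⟩ <;> tauto

theorem stmt18 (k l m : ℕ) (hk : 0 < k) (hl : 0 < l) (hm : 0 < m)
    (a b c d : LaurentPolynomial ℂ)
    (hak : IsKary k a) (hck : IsKary k c) (hbk : IsKary k b) (hdk : IsKary k d)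
    (hal : len a = (l : ℤ)) (hcl : len c = (l : ℤ))
    (hbm : len b = (m : ℤ)) (hdm : len d = (m : ℤ))
    (hac : Equicorrelational a c) (hbd : Equicorrelational b d) :
    IsKary k (subst (m : ℤ) a * b) ∧ IsKary k (subst (m : ℤ) c * d) ∧
    len (subst (m : ℤ) a * b) = (l : ℤ) * m ∧
    len (subst (m : ℤ) c * d) = (l : ℤ) * m ∧
    Equicorrelational (subst (m : ℤ) a * b) (subst (m : ℤ) c * d) ∧
    (TrivEquicorrelational (subst (m : ℤ) a * b) (subst (m : ℤ) c * d) ↔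
      (Associated a c ∧ Associated b d) ∨
      (Associated a (lconj c) ∧ Associated b (lconj d))) ∧
    (((Equicorrelational a c ∧ ¬ TrivEquicorrelational a c) ∨
        (Equicorrelational b d ∧ ¬ TrivEquicorrelational b d)) →
      (Equicorrelational (subst (m : ℤ) a * b) (subst (m : ℤ) c * d) ∧
        ¬ TrivEquicorrelational (subst (m : ℤ) a * b) (subst (m : ℤ) c * d))) :=
  stmt18_general k l m hl hm a b c d hak hck hbk hdk hal hcl hbm hdm hac hbd
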